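/- Let T be an invertible real n×n matrix none of whose eigenvalues is of the form c·z with c ≥ 0 real and z a root of unity (equivalently, no eigenvalue of T has a power that is a nonnegative real number). Then no nonzero real vector v is an eigenvector of (Tᵀ)^{-k} for any k ≥ 1. Consequently, by the Strichartz–Wang criterion, the convex hull of the attractor F of {x ↦ T(x + d_j)} is not a polytope (assuming conv(D) is n-dimensional and ‖T‖ < 1). -/

import Mathlib

open Matrix Polynomial

/-- The operator norm of a real `n × n` matrix. -/
noncomputable def opNorm {n : ℕ} (M : Matrix (Fin n) (Fin n) ℝ) : ℝ :=
  ‖Matrix.toEuclideanCLM (𝕜 := ℝ) M‖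

/-- The standard inner product on `ℝⁿ`. -/
def dotp {n : ℕ} (v x : Fin n → ℝ) : ℝ := ∑ i, v i * x i

/-
Every eigenvalue of a power `T ^ m` is the `m`-th power of an eigenvalue of `T`, so the hypothesis
implies that no power of `T` (or of `Tᵀ`) has a real eigenvalue; this gives the first claim.

For the second, suppose `K = conv F` is a polytope. A vertex `e` of `K` lies in `F`, hence equals
`T (x + d j)` with `x ∈ F`, and `x` is again a vertex because `x ↦ T (x + d j)` is an injective
affine self-map of `K`; moreover `Tᵀ` maps the normal cone of `K` at `e` into the one at `x`.
Following these steps around a cycle of the finitely many vertices, some `S = Tᵀ ^ m` maps a normal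
cone `N` into itself, and `N` contains a nonzero vector `v`. Since `conv D`, hence `K`, is
full-dimensional, `N` is salient. As `S` has no real eigenvalue, its characteristic polynomial
divides a real polynomial `P` with nonnegative coefficients and `P 0 > 0` (a product of factors
`(X ^ k - μ ^ k) (X ^ k - conj μ ^ k)` with `re (μ ^ k) ≤ 0`). Then `0 = P(S) v = ∑ Pᵢ Sⁱ v` is a
sum of vectors of the salient cone `N`, so every term vanishes, including `P 0 • v`.
-/

open Set ComplexConjugate

namespace Complex

lemma exists_pow_re_nonpos {μ : ℂ} (hμ : μ.im ≠ 0) : ∃ k : ℕ, 0 < k ∧ (μ ^ k).re ≤ 0 := by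
  set θ := |μ.arg|
  have hθ_pos : 0 < θ := abs_pos.2 fun h => hμ (arg_eq_zero_iff.1 h).2
  have hθ_lt : θ < Real.pi := by
    refine (abs_arg_le_pi μ).lt_of_ne fun h => hμ ?_
    rcases abs_eq Real.pi_pos.le |>.1 h with h | h
    · exact (arg_eq_pi_iff.1 h).2
    · exact absurd h (neg_pi_lt_arg μ).ne'
  -- the first multiple of `θ` reaching `π / 2` stays below `3π / 2`
  set k := ⌈Real.pi / 2 / θ⌉₊
  have hk_ge : Real.pi / 2 ≤ k * θ := (div_le_iff₀ hθ_pos).1 (Nat.le_ceil _)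
  have hk_lt : k * θ < Real.pi / 2 + θ := by
    have := mul_lt_mul_of_pos_right
      (Nat.ceil_lt_add_one (a := Real.pi / 2 / θ) (by positivity)) hθ_pos
    rwa [add_mul, div_mul_cancel₀ _ hθ_pos.ne', one_mul] at this
  have hpow : μ ^ k = ((‖μ‖ ^ k : ℝ) : ℂ) * exp (((k * μ.arg : ℝ)) * I) := by
    conv_lhs => rw [← norm_mul_exp_arg_mul_I μ]
    rw [mul_pow, ← exp_nat_mul]
    push_cast
    ring_nf
  refine ⟨k, Nat.ceil_pos.2 (by positivity), ?_⟩
  rw [hpow, re_ofReal_mul, exp_ofReal_mul_I_re, ← Real.cos_abs, abs_mul, Nat.abs_cast]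
  exact mul_nonpos_of_nonneg_of_nonpos (by positivity)
    (Real.cos_nonpos_of_pi_div_two_le_of_le hk_ge (by linarith))

lemma exists_eq_mul_of_pow_im_eq_zero {lam : ℂ} {j : ℕ} (hj : 1 ≤ j) (h : (lam ^ j).im = 0) :
    ∃ (c : ℝ) (z : ℂ), 0 ≤ c ∧ lam = (c : ℂ) * z ∧ ∃ j : ℕ, 1 ≤ j ∧ z ^ j = 1 := by
  rcases eq_or_ne lam 0 with rfl | hlam
  · exact ⟨0, 1, le_rfl, by simp, 1, le_rfl, one_pow 1⟩
  have hc : (‖lam‖ : ℂ) ≠ 0 := ofReal_ne_zero.2 (norm_ne_zero_iff.2 hlam)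
  refine ⟨‖lam‖, lam / ‖lam‖, norm_nonneg _, (mul_div_cancel₀ _ hc).symm, 2 * j, by omega, ?_⟩
  -- `w` is real of modulus one, so `w ^ 2 = w * conj w = ‖w‖ ^ 2 = 1`
  set w := (lam / ‖lam‖) ^ j with hw
  have hw_im : w.im = 0 := by
    rw [hw, div_pow, ← ofReal_pow, div_ofReal_im, h, zero_div]
  have hw_norm : ‖w‖ = 1 := by
    rw [norm_pow, norm_div, norm_real, norm_norm, div_self (norm_ne_zero_iff.2 hlam), one_pow]
  calc (lam / ‖lam‖) ^ (2 * j) = w * conj w := by rw [pow_mul', conj_eq_iff_im.2 hw_im, sq]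
    _ = 1 := by rw [mul_conj, normSq_eq_norm_sq, hw_norm]; norm_num

end Complex

namespace Polynomial

lemma exists_coeff_nonneg_isRoot_map {μ : ℂ} (hμ : μ.im ≠ 0) :
    ∃ Q : ℝ[X], (∀ i, 0 ≤ Q.coeff i) ∧ 0 < Q.coeff 0 ∧ (Q.map (algebraMap ℝ ℂ)).IsRoot μ := by
  obtain ⟨k, hk, hre⟩ := Complex.exists_pow_re_nonpos hμ
  have hμ0 : μ ≠ 0 := by rintro rfl; simp at hμ
  set w := μ ^ k with hw
  -- `(X ^ k - w) (X ^ k - conj w)`, whose middle coefficient `-2 re w` is nonnegative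
  refine ⟨X ^ (2 * k) + C (-2 * w.re) * X ^ k + C (Complex.normSq w), fun i => ?_, ?_, ?_⟩
  · simp only [coeff_add, coeff_C_mul, coeff_X_pow, coeff_C]
    have := Complex.normSq_nonneg w
    split_ifs <;> nlinarith
  · have hw0 : w ≠ 0 := pow_ne_zero k hμ0
    simpa [coeff_X_pow, hk.ne, hk.ne'] using hw0
  · have h2 : ((-2 * w.re : ℝ) : ℂ) = -(w + conj w) := by rw [Complex.add_conj]; push_cast; ring
    simp only [IsRoot, Polynomial.map_add, Polynomial.map_mul, Polynomial.map_pow, map_X, map_C,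
      eval_add, eval_mul, eval_pow, eval_X, eval_C, Complex.coe_algebraMap, h2,
      ← Complex.mul_conj, pow_mul', ← hw]
    ring

lemma exists_coeff_nonneg_prod_dvd_map (s : Multiset ℂ) (hs : ∀ μ ∈ s, μ.im ≠ 0) :
    ∃ P : ℝ[X], (∀ i, 0 ≤ P.coeff i) ∧ 0 < P.coeff 0 ∧
      (s.map (X - C ·)).prod ∣ P.map (algebraMap ℝ ℂ) := by
  induction s using Multiset.induction_on with
  | empty => exact ⟨1, fun i => by rw [coeff_one]; split_ifs <;> norm_num, by simp, by simp⟩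
  | cons μ s ih =>
    obtain ⟨Q, hQ, hQ0, hQμ⟩ := exists_coeff_nonneg_isRoot_map (hs μ (s.mem_cons_self μ))
    obtain ⟨P, hP, hP0, hsP⟩ := ih fun ν hν => hs ν (Multiset.mem_cons_of_mem hν)
    refine ⟨Q * P, fun i => ?_, ?_, ?_⟩
    · rw [coeff_mul]
      exact Finset.sum_nonneg fun x _ => mul_nonneg (hQ _) (hP _)
    · rw [mul_coeff_zero]
      exact mul_pos hQ0 hP0
    · rw [Multiset.map_cons, Multiset.prod_cons, Polynomial.map_mul]
      exact mul_dvd_mul (dvd_iff_isRoot.2 hQμ) hsP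

lemma exists_coeff_nonneg_dvd {p : ℝ[X]} (hp : p ≠ 0)
    (h : ∀ μ : ℂ, (p.map (algebraMap ℝ ℂ)).IsRoot μ → μ.im ≠ 0) :
    ∃ P : ℝ[X], (∀ i, 0 ≤ P.coeff i) ∧ 0 < P.coeff 0 ∧ p ∣ P := by
  have hp' : p.map (algebraMap ℝ ℂ) ≠ 0 := Polynomial.map_ne_zero hp
  obtain ⟨P, hP, hP0, hdvd⟩ := exists_coeff_nonneg_prod_dvd_map (p.map (algebraMap ℝ ℂ)).roots
    fun μ hμ => h μ ((mem_roots hp').1 hμ)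
  refine ⟨P, hP, hP0, (map_dvd_map' (algebraMap ℝ ℂ)).1 ?_⟩
  rw [(IsAlgClosed.splits (p.map (algebraMap ℝ ℂ))).eq_prod_roots]
  exact (isUnit_C.2 (leadingCoeff_ne_zero.2 hp').isUnit).mul_left_dvd.2 hdvd

end Polynomial

namespace PointedCone

variable {R V ι : Type*} [Semiring R] [PartialOrder R] [IsOrderedRing R] [AddCommGroup V]
  [Module R V]

lemma eq_zero_of_sum_eq_zero {C : PointedCone R V} (hC : (C : ConvexCone R V).Salient)
    {s : Finset ι} {x : ι → V} (hx : ∀ i ∈ s, x i ∈ C) (hsum : ∑ i ∈ s, x i = 0) :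
    ∀ i ∈ s, x i = 0 := by
  classical
  induction s using Finset.induction_on with
  | empty => simp
  | insert a s ha ih =>
    rw [Finset.sum_insert ha] at hsum
    have hxa : x a = 0 := by
      by_contra hne
      refine hC (x a) (hx a (s.mem_insert_self a)) hne ?_
      rw [neg_eq_of_add_eq_zero_right hsum]
      exact C.sum_mem fun i hi => hx i (Finset.mem_insert_of_mem hi)
    rw [hxa, zero_add] at hsum
    intro i hi
    rcases Finset.mem_insert.1 hi with rfl | hi
    · exact hxa
    · exact ih (fun i hi => hx i (Finset.mem_insert_of_mem hi)) hsum i hi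

end PointedCone

lemma Module.End.eq_zero_of_mapsTo_of_aeval_eq_zero {V : Type*} [AddCommGroup V] [Module ℝ V]
    {C : PointedCone ℝ V} (hC : (C : ConvexCone ℝ V).Salient) {f : Module.End ℝ V}
    (hf : Set.MapsTo f C C) {P : ℝ[X]} (hP : ∀ i, 0 ≤ P.coeff i) (hP0 : 0 < P.coeff 0)
    (hfP : aeval f P = 0) {v : V} (hv : v ∈ C) : v = 0 := by
  have hpow : ∀ i, (f ^ i) v ∈ C := fun i => by
    rw [Module.End.coe_pow]
    exact hf.iterate i hv
  have hsum : ∑ i ∈ Finset.range (P.natDegree + 1), P.coeff i • (f ^ i) v = 0 := by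
    simpa [aeval_eq_sum_range] using congrArg (· v) hfP
  have h0 := PointedCone.eq_zero_of_sum_eq_zero hC (fun i _ => C.smul_mem (hP i) (hpow i)) hsum 0
    (Finset.mem_range.2 P.natDegree.succ_pos)
  rwa [pow_zero, Module.End.one_apply, smul_eq_zero, or_iff_right hP0.ne'] at h0

namespace Matrix

variable {ι : Type*} [Fintype ι] [DecidableEq ι]

lemma im_ne_zero_of_isRoot_charpoly_pow {T : Matrix ι ι ℝ}
    (hT : ∀ lam : ℂ, (T.map (algebraMap ℝ ℂ)).charpoly.IsRoot lam → ∀ j, 0 < j → (lam ^ j).im ≠ 0)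
    {m : ℕ} (hm : 0 < m) {μ : ℂ} (hμ : ((T ^ m).charpoly.map (algebraMap ℝ ℂ)).IsRoot μ) :
    μ.im ≠ 0 := by
  rw [← charpoly_map, Matrix.map_pow, ← mem_spectrum_iff_isRoot_charpoly,
    spectrum.map_pow_of_pos _ hm] at hμ
  obtain ⟨lam, hlam, rfl⟩ := hμ
  exact hT lam (mem_spectrum_iff_isRoot_charpoly.1 hlam) m hm

lemma eq_zero_of_mulVec_eq_smul {A : Matrix ι ι ℝ}
    (hA : ∀ μ : ℂ, (A.charpoly.map (algebraMap ℝ ℂ)).IsRoot μ → μ.im ≠ 0) {v : ι → ℝ} {c : ℝ}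
    (hv : A *ᵥ v = c • v) : v = 0 := by
  by_contra hv0
  have hc : Module.End.HasEigenvalue (toLin' A) c := Module.End.hasEigenvalue_of_hasEigenvector
    ⟨Module.End.mem_eigenspace_iff.2 (by rwa [toLin'_apply]), hv0⟩
  rw [Module.End.hasEigenvalue_iff_isRoot_charpoly, charpoly_toLin'] at hc
  exact hA c hc.map (Complex.ofReal_im c)

lemma mulVec_eq_inv_smul_of_inv_mulVec_eq_smul {A : Matrix ι ι ℝ} (hA : IsUnit A.det)
    {v : ι → ℝ} {μ : ℝ} (hv : A⁻¹ *ᵥ v = μ • v) : A *ᵥ v = μ⁻¹ • v := by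
  have hv' : v = μ • A *ᵥ v := by
    simpa [mulVec_mulVec, mul_nonsing_inv _ hA, mulVec_smul] using congrArg (A *ᵥ ·) hv
  rcases eq_or_ne μ 0 with rfl | hμ
  · rw [zero_smul] at hv'
    simp [hv']
  · rw [hv', smul_smul, inv_mul_cancel₀ hμ, one_smul, ← hv']

lemma iterate_mulVec {R : Type*} [CommSemiring R] (A : Matrix ι ι R) (m : ℕ) :
    (A *ᵥ ·)^[m] = (A ^ m *ᵥ ·) := by
  induction m with
  | zero => funext v; simp
  | succ m ih => funext v; rw [Function.iterate_succ_apply', ih, mulVec_mulVec, pow_succ']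

lemma eq_zero_of_mapsTo_of_salient {A : Matrix ι ι ℝ}
    (hA : ∀ μ : ℂ, (A.charpoly.map (algebraMap ℝ ℂ)).IsRoot μ → μ.im ≠ 0)
    {C : PointedCone ℝ (ι → ℝ)} (hC : (C : ConvexCone ℝ (ι → ℝ)).Salient)
    (hAC : MapsTo (A *ᵥ ·) C C) {v : ι → ℝ} (hv : v ∈ C) : v = 0 := by
  obtain ⟨P, hP, hP0, hdvd⟩ := exists_coeff_nonneg_dvd (charpoly_monic A).ne_zero hA
  rw [← charpoly_toLin'] at hdvd
  refine Module.End.eq_zero_of_mapsTo_of_aeval_eq_zero hC (f := toLin' A)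
    (fun x hx => by simpa using hAC hx) hP hP0 ?_ hv
  exact aeval_eq_zero_of_dvd_aeval_eq_zero hdvd (LinearMap.aeval_self_charpoly _)

end Matrix

lemma IsCompact.exists_mem_extremePoints_forall_le {E : Type*} [AddCommGroup E] [Module ℝ E]
    [TopologicalSpace E] [T2Space E] [IsTopologicalAddGroup E] [ContinuousSMul ℝ E]
    [LocallyConvexSpace ℝ E] {s : Set E} (hs : IsCompact s) (hne : s.Nonempty)
    (l : StrongDual ℝ E) : ∃ x ∈ s.extremePoints ℝ, ∀ y ∈ s, l y ≤ l x := by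
  obtain ⟨z, hz, hzmax⟩ := hs.exists_isMaxOn hne l.continuous.continuousOn
  have hexp : IsExposed ℝ s (l.toExposed s) := ContinuousLinearMap.toExposed.isExposed
  obtain ⟨x, hx⟩ := (hexp.isCompact hs).extremePoints_nonempty ⟨z, hz, hzmax⟩
  exact ⟨x, hexp.isExtreme.extremePoints_subset_extremePoints hx, hx.1.2⟩

lemma Set.MapsTo.convexHull {E F : Type*} [AddCommGroup E] [Module ℝ E] [AddCommGroup F]
    [Module ℝ F] {f : E →ᵃ[ℝ] F} {s : Set E} {t : Set F} (h : MapsTo f s t) :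
    MapsTo f (convexHull ℝ s) (convexHull ℝ t) := by
  rw [mapsTo_iff_image_subset, f.image_convexHull]
  exact convexHull_mono h.image_subset

lemma mem_extremePoints_of_map_mem_extremePoints {E F : Type*} [AddCommGroup E] [Module ℝ E]
    [AddCommGroup F] [Module ℝ F] {f : E →ᵃ[ℝ] F} (hf : Function.Injective f) {s : Set E}
    {t : Set F} (hst : MapsTo f s t) {x : E} (hx : x ∈ s) (hfx : f x ∈ t.extremePoints ℝ) :
    x ∈ s.extremePoints ℝ := by
  refine mem_extremePoints.2 ⟨hx, fun y hy z hz hxyz => ?_⟩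
  have hseg : f x ∈ openSegment ℝ (f y) (f z) := by
    rw [← image_openSegment _ f]
    exact mem_image_of_mem f hxyz
  obtain ⟨hy', hz'⟩ := (mem_extremePoints.1 hfx).2 _ (hst hy) _ (hst hz) hseg
  exact ⟨hf hy', hf hz'⟩

lemma Set.Finite.exists_iterate_mapsTo_cycle {α β : Type*} {E : Set α} (hE : E.Finite)
    {N : α → Set β} {f : β → β} (hstep : ∀ e ∈ E, ∃ e' ∈ E, MapsTo f (N e) (N e'))
    {e₀ : α} (he₀ : e₀ ∈ E) :
    ∃ e, ∃ a m : ℕ, 0 < m ∧ MapsTo f^[a] (N e₀) (N e) ∧ MapsTo f^[m] (N e) (N e) := by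
  choose s hsE hs using hstep
  let σ : E → E := fun e => ⟨s e e.2, hsE e e.2⟩
  have hiter : ∀ k (e : E), MapsTo f^[k] (N e) (N (σ^[k] e)) := by
    intro k
    induction k with
    | zero => exact fun e => mapsTo_id _
    | succ k ih => exact fun e => (ih (σ e)).comp (hs e e.2)
  have : Finite E := hE.to_subtype
  obtain ⟨i, j, hij, heq⟩ := Finite.exists_ne_map_eq_of_infinite fun k => σ^[k] ⟨e₀, he₀⟩
  wlog hlt : i < j generalizing i j
  · exact this j i hij.symm heq.symm (lt_of_le_of_ne (not_lt.1 hlt) hij.symm)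
  refine ⟨σ^[i] ⟨e₀, he₀⟩, i, j - i, by omega, hiter i ⟨e₀, he₀⟩, ?_⟩
  have h := hiter (j - i) (σ^[i] ⟨e₀, he₀⟩)
  rwa [← Function.iterate_add_apply, Nat.sub_add_cancel hlt.le, ← heq] at h

section

variable {ι : Type*} [Fintype ι]

def normalCone (K : Set (ι → ℝ)) (e : ι → ℝ) : PointedCone ℝ (ι → ℝ) :=
  PointedCone.dual (dotProductBilin ℝ ℝ) ((e - ·) '' K)

lemma mem_normalCone {K : Set (ι → ℝ)} {e u : ι → ℝ} :
    u ∈ normalCone K e ↔ ∀ y ∈ K, u ⬝ᵥ y ≤ u ⬝ᵥ e := by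
  simp [normalCone, sub_dotProduct, dotProduct_comm u]

lemma eq_zero_of_forall_dotProduct_eq {K : Set (ι → ℝ)} (hK : vectorSpan ℝ K = ⊤) {u : ι → ℝ}
    {c : ℝ} (hu : ∀ y ∈ K, u ⬝ᵥ y = c) : u = 0 := by
  have hker : vectorSpan ℝ K ≤ LinearMap.ker (dotProductBilin ℝ ℝ u) := by
    rw [vectorSpan_def, Submodule.span_le]
    rintro _ ⟨y, hy, y', hy', rfl⟩
    simp [dotProduct_sub, hu y hy, hu y' hy']
  have huu : u ⬝ᵥ u = 0 := hker (hK ▸ Submodule.mem_top)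
  exact dotProduct_self_eq_zero.1 huu

lemma salient_normalCone {K : Set (ι → ℝ)} (hK : vectorSpan ℝ K = ⊤) (e : ι → ℝ) :
    (normalCone K e : ConvexCone ℝ (ι → ℝ)).Salient := by
  intro u hu hu0 hneg
  refine hu0 (eq_zero_of_forall_dotProduct_eq hK (c := u ⬝ᵥ e) fun y hy => ?_)
  have h₁ := mem_normalCone.1 hu y hy
  have h₂ := mem_normalCone.1 hneg y hy
  simp only [neg_dotProduct] at h₂
  linarith

lemma exists_mem_extremePoints_mem_normalCone {K : Set (ι → ℝ)} (hK : IsCompact K)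
    (hne : K.Nonempty) (u : ι → ℝ) : ∃ e ∈ K.extremePoints ℝ, u ∈ normalCone K e := by
  obtain ⟨e, he, hmax⟩ := hK.exists_mem_extremePoints_forall_le hne
    (LinearMap.toContinuousLinearMap (dotProductBilin ℝ ℝ u))
  exact ⟨e, he, mem_normalCone.2 hmax⟩

def mulVecAdd (T : Matrix ι ι ℝ) (a : ι → ℝ) : (ι → ℝ) →ᵃ[ℝ] (ι → ℝ) where
  toFun x := T *ᵥ (x + a)
  linear := mulVecLin T
  map_vadd' x v := by simp [mulVec_add, add_assoc]

@[simp]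
lemma mulVecAdd_apply (T : Matrix ι ι ℝ) (a x : ι → ℝ) : mulVecAdd T a x = T *ᵥ (x + a) := rfl

lemma mulVecAdd_linear (T : Matrix ι ι ℝ) (a : ι → ℝ) : (mulVecAdd T a).linear = mulVecLin T :=
  rfl

lemma dotProduct_mulVecAdd (T : Matrix ι ι ℝ) (a u x : ι → ℝ) :
    u ⬝ᵥ mulVecAdd T a x = (Tᵀ *ᵥ u) ⬝ᵥ x + u ⬝ᵥ (T *ᵥ a) := by
  rw [mulVecAdd_apply, mulVec_add, dotProduct_add, dotProduct_mulVec, mulVec_transpose,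
    dotProduct_comm]

lemma transpose_mulVec_mem_normalCone {T : Matrix ι ι ℝ} {a : ι → ℝ} {K : Set (ι → ℝ)}
    (hK : MapsTo (mulVecAdd T a) K K) {x u : ι → ℝ}
    (hu : u ∈ normalCone K (mulVecAdd T a x)) : Tᵀ *ᵥ u ∈ normalCone K x := by
  refine mem_normalCone.2 fun y hy => ?_
  have := mem_normalCone.1 hu _ (hK hy)
  rw [dotProduct_mulVecAdd, dotProduct_mulVecAdd] at this
  linarith

variable [DecidableEq ι] {T : Matrix ι ι ℝ}

lemma mulVecAdd_injective (hT : IsUnit T.det) (a : ι → ℝ) : Function.Injective (mulVecAdd T a) :=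
  fun _ _ h =>
    add_left_injective a (mulVec_injective_iff_isUnit.2 ((isUnit_iff_isUnit_det T).2 hT) h)

variable {κ : Type*} {d : κ → ι → ℝ} {F : Set (ι → ℝ)}

lemma vectorSpan_eq_top_of_mulVec_add_mem (hT : IsUnit T.det)
    (hD : vectorSpan ℝ (range d) = ⊤) {x : ι → ℝ} (hx : ∀ j, T *ᵥ (x + d j) ∈ F) :
    vectorSpan ℝ F = ⊤ := by
  refine top_unique ?_
  calc ⊤ = (vectorSpan ℝ (range d)).map (mulVecLin T) := by
        rw [hD, Submodule.map_top, eq_comm, LinearMap.range_eq_top]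
        exact mulVec_surjective_iff_isUnit.2 ((isUnit_iff_isUnit_det T).2 hT)
    _ = vectorSpan ℝ (mulVecAdd T x '' range d) := by
        rw [← mulVecAdd_linear T x, AffineMap.map_vectorSpan]
    _ ≤ vectorSpan ℝ F := vectorSpan_mono ℝ <| by
        rintro _ ⟨_, ⟨j, rfl⟩, rfl⟩
        simpa [add_comm] using hx j

lemma exists_mapsTo_normalCone_of_mem_extremePoints (hT : IsUnit T.det)
    (hF : F = ⋃ j, (fun x => T *ᵥ (x + d j)) '' F) {e : ι → ℝ}
    (he : e ∈ (convexHull ℝ F).extremePoints ℝ) :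
    ∃ e' ∈ (convexHull ℝ F).extremePoints ℝ,
      MapsTo (Tᵀ *ᵥ ·) (normalCone (convexHull ℝ F) e) (normalCone (convexHull ℝ F) e') := by
  have heF : e ∈ F := extremePoints_convexHull_subset he
  rw [hF] at heF
  obtain ⟨j, x, hx, rfl⟩ := mem_iUnion.1 heF
  have hmaps : MapsTo (mulVecAdd T (d j)) (convexHull ℝ F) (convexHull ℝ F) :=
    MapsTo.convexHull fun y hy => by rw [hF]; exact mem_iUnion.2 ⟨j, y, hy, rfl⟩
  exact ⟨x, mem_extremePoints_of_map_mem_extremePoints (mulVecAdd_injective hT (d j)) hmaps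
    (subset_convexHull ℝ F hx) he, fun u hu => transpose_mulVec_mem_normalCone hmaps hu⟩

theorem not_exists_convexHull_eq_convexHull_finset [Nonempty ι] (hT : IsUnit T.det)
    (hTpow : ∀ m, 0 < m → ∀ μ : ℂ, ((Tᵀ ^ m).charpoly.map (algebraMap ℝ ℂ)).IsRoot μ → μ.im ≠ 0)
    (hD : vectorSpan ℝ (range d) = ⊤) (hFne : F.Nonempty)
    (hF : F = ⋃ j, (fun x => T *ᵥ (x + d j)) '' F) :
    ¬ ∃ V : Finset (ι → ℝ), convexHull ℝ F = convexHull ℝ (V : Set (ι → ℝ)) := by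
  rintro ⟨V, hV⟩
  have hKcpt : IsCompact (convexHull ℝ F) := hV ▸ V.finite_toSet.isCompact_convexHull (𝕜 := ℝ)
  have hE : ((convexHull ℝ F).extremePoints ℝ).Finite :=
    V.finite_toSet.subset (hV ▸ extremePoints_convexHull_subset)
  obtain ⟨x, hx⟩ := hFne
  have hKspan : vectorSpan ℝ (convexHull ℝ F) = ⊤ := by
    refine top_unique ((vectorSpan_eq_top_of_mulVec_add_mem hT hD (x := x) fun j => ?_).ge.trans
      (vectorSpan_mono ℝ (subset_convexHull ℝ F)))
    rw [hF]
    exact mem_iUnion.2 ⟨j, x, hx, rfl⟩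
  obtain ⟨u, hu⟩ := exists_ne (0 : ι → ℝ)
  obtain ⟨e₀, he₀, hu₀⟩ :=
    exists_mem_extremePoints_mem_normalCone hKcpt ⟨x, subset_convexHull ℝ F hx⟩ u
  obtain ⟨e, a, m, hm, ha, hcycle⟩ := hE.exists_iterate_mapsTo_cycle
    (fun _ he => exists_mapsTo_normalCone_of_mem_extremePoints hT hF he) he₀
  rw [iterate_mulVec] at ha hcycle
  have hTa : IsUnit (Tᵀ ^ a) := (isUnit_iff_isUnit_det _).2 (by
    rw [det_pow, det_transpose]; exact hT.pow a)
  refine hu (mulVec_injective_iff_isUnit.2 hTa ?_)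
  rw [mulVec_zero]
  exact eq_zero_of_mapsTo_of_salient (hTpow m hm) (salient_normalCone hKspan e) hcycle (ha hu₀)

end

theorem stmt13_general {n q : ℕ} (hn : 1 ≤ n) (T : Matrix (Fin n) (Fin n) ℝ)
    (hdet : IsUnit T.det)
    (heigs : ∀ lam : ℂ, ((T.map (algebraMap ℝ ℂ)).charpoly).IsRoot lam →
      ¬ ∃ (c : ℝ) (z : ℂ), 0 ≤ c ∧ lam = (c : ℂ) * z ∧ ∃ j : ℕ, 1 ≤ j ∧ z ^ j = 1)
    (d : Fin q → (Fin n → ℝ))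
    (hfull : Module.finrank ℝ
      (affineSpan ℝ (convexHull ℝ (Set.range d))).direction = n)
    (F : Set (Fin n → ℝ)) (hFne : F.Nonempty)
    (hF : F = ⋃ j : Fin q, (fun x => T *ᵥ (x + d j)) '' F) :
    (∀ (v : Fin n → ℝ), v ≠ 0 → ∀ k : ℕ, 1 ≤ k →
      ¬ ∃ μ : ℝ, (T.transpose⁻¹ ^ k) *ᵥ v = μ • v) ∧
    ¬ ∃ V : Finset (Fin n → ℝ), convexHull ℝ F = convexHull ℝ (V : Set (Fin n → ℝ)) := by
  have hreal : ∀ m, 0 < m → ∀ μ : ℂ,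
      ((Tᵀ ^ m).charpoly.map (algebraMap ℝ ℂ)).IsRoot μ → μ.im ≠ 0 := by
    intro m hm μ hμ
    rw [← transpose_pow, charpoly_transpose] at hμ
    exact im_ne_zero_of_isRoot_charpoly_pow
      (fun lam hlam j hj h => heigs lam hlam (Complex.exists_eq_mul_of_pow_im_eq_zero hj h)) hm hμ
  have hD : vectorSpan ℝ (range d) = ⊤ := by
    rw [affineSpan_convexHull, direction_affineSpan] at hfull
    exact Submodule.eq_top_of_finrank_eq (by rw [hfull, Module.finrank_fin_fun])
  have : Nonempty (Fin n) := ⟨⟨0, hn⟩⟩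
  refine ⟨fun v hv k hk ⟨μ, hμ⟩ => hv ?_,
    not_exists_convexHull_eq_convexHull_finset hdet hreal hD hFne hF⟩
  rw [inv_pow'] at hμ
  refine eq_zero_of_mulVec_eq_smul (hreal k hk) (mulVec_eq_inv_smul_of_inv_mulVec_eq_smul ?_ hμ)
  rw [det_pow, det_transpose]
  exact hdet.pow k

/-- If no eigenvalue of the invertible real matrix `T` has the form `c·z` with
`c ≥ 0` and `z` a root of unity, then no nonzero real vector is an eigenvector of
`(Tᵀ)^{-k}` for any `k ≥ 1`; consequently (by the Strichartz–Wang criterion, with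
`conv(D)` full-dimensional, `n ≥ 1` and `‖T‖ < 1`) the convex hull of the attractor
`F` is not a polytope. -/
theorem stmt13 {n q : ℕ} (hn : 1 ≤ n) (hq : 0 < q) (T : Matrix (Fin n) (Fin n) ℝ)
    (hdet : IsUnit T.det) (hT : opNorm T < 1)
    (heigs : ∀ lam : ℂ, ((T.map (algebraMap ℝ ℂ)).charpoly).IsRoot lam →
      ¬ ∃ (c : ℝ) (z : ℂ), 0 ≤ c ∧ lam = (c : ℂ) * z ∧ ∃ j : ℕ, 1 ≤ j ∧ z ^ j = 1)
    (d : Fin q → (Fin n → ℝ))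
    (hfull : Module.finrank ℝ
      (affineSpan ℝ (convexHull ℝ (Set.range d))).direction = n)
    (F : Set (Fin n → ℝ)) (hFne : F.Nonempty) (hFcpt : IsCompact F)
    (hF : F = ⋃ j : Fin q, (fun x => T *ᵥ (x + d j)) '' F) :
    (∀ (v : Fin n → ℝ), v ≠ 0 → ∀ k : ℕ, 1 ≤ k →
      ¬ ∃ μ : ℝ, (T.transpose⁻¹ ^ k) *ᵥ v = μ • v) ∧
    ¬ ∃ V : Finset (Fin n → ℝ), convexHull ℝ F = convexHull ℝ (V : Set (Fin n → ℝ)) :=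
  stmt13_general hn T hdet heigs d hfull F hFne hF
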